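/- With ℓ(λ) = Σ_{α ∈ Φ⁺} |⟨λ, α⟩| as above, if there exists α ∈ Φ⁺ with ⟨μ₁, α⟩⟨μ₂, α⟩ < 0, then ℓ(μ₁) + ℓ(μ₂) − ℓ(μ₁ + μ₂) ≥ 2. -/

import Mathlib

/-! The defect `ℓ μ₁ + ℓ μ₂ - ℓ (μ₁ + μ₂)` is a sum over `Φ⁺` of the triangle-inequality defects
`|x| + |y| - |x + y|`, all nonnegative; for integers `x`, `y` of opposite signs this defect equals
`2 min(|x|, |y|) ≥ 2`. -/

theorem Int.two_le_abs_add_abs_sub_abs_add_of_mul_neg {x y : ℤ} (hxy : x * y < 0) :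
    2 ≤ |x| + |y| - |x + y| := by
  rcases mul_neg_iff.mp hxy with ⟨hx, hy⟩ | ⟨hx, hy⟩ <;>
    rcases abs_cases (x + y) with ⟨hs, _⟩ | ⟨hs, _⟩ <;>
    simp only [abs_of_pos, abs_of_neg, hx, hy, hs] <;> omega

/-- With `ℓ (λ) = ∑_{α ∈ Φ⁺} |⟨λ, α⟩|`, if some positive root `α` satisfies
`⟨μ₁, α⟩⟨μ₂, α⟩ < 0`, then `ℓ μ₁ + ℓ μ₂ − ℓ (μ₁ + μ₂) ≥ 2`. -/
theorem stmt2 {X A : Type*} [AddCommGroup X] (Φplus : Finset A)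
    (pair : X →+ A → ℤ) (ℓ : X → ℤ)
    (hℓ : ∀ x : X, ℓ x = ∑ a ∈ Φplus, |pair x a|) (μ₁ μ₂ : X)
    (h : ∃ a ∈ Φplus, pair μ₁ a * pair μ₂ a < 0) :
    2 ≤ ℓ μ₁ + ℓ μ₂ - ℓ (μ₁ + μ₂) := by
  obtain ⟨a₀, ha₀, hneg⟩ := h
  set defect : A → ℤ := fun a => |pair μ₁ a| + |pair μ₂ a| - |pair μ₁ a + pair μ₂ a|
  have hsum : ℓ μ₁ + ℓ μ₂ - ℓ (μ₁ + μ₂) = ∑ a ∈ Φplus, defect a := by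
    simp only [defect, hℓ, map_add, Pi.add_apply, Finset.sum_sub_distrib, Finset.sum_add_distrib]
  calc 2 ≤ defect a₀ := Int.two_le_abs_add_abs_sub_abs_add_of_mul_neg hneg
    _ ≤ ∑ a ∈ Φplus, defect a :=
        Finset.single_le_sum (fun a _ => sub_nonneg.mpr (abs_add_le _ _)) ha₀
    _ = ℓ μ₁ + ℓ μ₂ - ℓ (μ₁ + μ₂) := hsum.symm
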